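/- In the construction C_{n,n+1} for odd n ≥ 3, the set 𝓛 ∪ {l_{p_g}, l_{p_h}} consisting of all n−1 horizontal lines together with any two distinct lines through p is a 2-packing of size n+1 (no three of these lines share a common point). -/
import Mathlib


open Finset

/-- Points of the linear system `C_{n,n+1}`: `Sum.inl (h, g)` are the grid points
(used when `g ≠ 0`), `Sum.inr false` is the point `p`, `Sum.inr true` is the point `q`. -/
abbrev Pt (Γ : Type) := (Γ × Γ) ⊕ Bool

variable {Γ : Type} [AddCommGroup Γ] [Fintype Γ] [DecidableEq Γ]

/-- The horizontal line `L_g = {(h,g) : h ∈ Γ}` (used for `g ≠ 0`). -/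
def Lh (g : Γ) : Finset (Pt Γ) := univ.image fun h => Sum.inl (h, g)

/-- The line `l_{p_g} = {(g,h) : h ∈ Γ \ {0}} ∪ {p}` through `p`. -/
def Lp (g : Γ) : Finset (Pt Γ) :=
  ((univ.filter fun h => h ≠ (0 : Γ)).image fun h => Sum.inl (g, h)) ∪ {Sum.inr false}

/-- The line `l_{q_g} = {(h, h+g) : h ∈ Γ, h+g ≠ 0} ∪ {q}` through `q`. -/
def Lq (g : Γ) : Finset (Pt Γ) :=
  ((univ.filter fun h => h + g ≠ (0 : Γ)).image fun h => Sum.inl (h, h + g)) ∪ {Sum.inr true}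

/-- The line set of the linear system `C_{n,n+1}`. -/
def CL (Γ : Type) [AddCommGroup Γ] [Fintype Γ] [DecidableEq Γ] : Finset (Finset (Pt Γ)) :=
  ((univ.filter fun g => g ≠ (0 : Γ)).image Lh) ∪ (univ.image Lp) ∪ (univ.image Lq)

omit [AddCommGroup Γ] in
lemma mem_Lh_inl {a b c : Γ} : (Sum.inl (a,b) : Pt Γ) ∈ Lh c ↔ b = c := by
  simp [Lh, Prod.ext_iff, eq_comm]

lemma mem_Lp_inl {a b c : Γ} : (Sum.inl (a,b) : Pt Γ) ∈ Lp c ↔ a = c ∧ b ≠ 0 := by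
  simp only [Lp, mem_union, mem_image, mem_filter, mem_univ, true_and, mem_singleton,
    Sum.inl.injEq, Prod.mk.injEq, reduceCtorEq, or_false]
  constructor
  · rintro ⟨x, hx, rfl, rfl⟩; exact ⟨rfl, hx⟩
  · rintro ⟨rfl, hb⟩; exact ⟨b, hb, rfl, rfl⟩

lemma mem_Lh_inr {b : Bool} {c : Γ} : (Sum.inr b : Pt Γ) ∉ Lh c := by simp [Lh]

lemma mem_Lp_inr {b : Bool} {c : Γ} : (Sum.inr b : Pt Γ) ∈ Lp c ↔ b = false := by simp [Lp]

lemma Lh_ne_Lp (c d : Γ) : Lh c ≠ Lp d := by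
  intro hEq
  have : (Sum.inr false : Pt Γ) ∈ Lh c := by
    rw [hEq, mem_Lp_inr]
  exact mem_Lh_inr this

lemma Lh_injective : Function.Injective (Lh (Γ := Γ)) := by
  intro a b hEq
  have : (Sum.inl ((0 : Γ), a) : Pt Γ) ∈ Lh b := by
    rw [← hEq, mem_Lh_inl]
  rwa [mem_Lh_inl] at this

/-- The `n-1` horizontal lines together with any two distinct lines through `p` form a
2-packing of `C_{n,n+1}` of size `n+1`. -/
theorem horizontal_with_two_p_lines_is_two_packing
    (n : ℕ) (hn : Fintype.card Γ = n) (hodd : Odd n) (h3 : 3 ≤ n)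
    (g h : Γ) (hgh : g ≠ h) :
    ((univ.filter fun x => x ≠ (0 : Γ)).image Lh ∪ {Lp g, Lp h}) ⊆ CL Γ ∧
    (∀ x : Pt Γ,
      (((univ.filter fun y => y ≠ (0 : Γ)).image Lh ∪ {Lp g, Lp h}).filter
        fun l => x ∈ l).card ≤ 2) ∧
    ((univ.filter fun x => x ≠ (0 : Γ)).image Lh ∪ {Lp g, Lp h}).card = n + 1 := by
  have hcard2 : 1 < Fintype.card Γ := by omega
  obtain ⟨b0, hb0⟩ := Fintype.exists_ne_of_one_lt_card hcard2 (0 : Γ)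
  have hLp_inj : Lp g ≠ Lp h := by
    intro hEq
    have h1 : (Sum.inl (g, b0) : Pt Γ) ∈ Lp g := mem_Lp_inl.mpr ⟨rfl, hb0⟩
    rw [hEq, mem_Lp_inl] at h1
    exact hgh h1.1
  refine ⟨?_, ?_, ?_⟩
  · intro l hl
    rw [mem_union] at hl
    rcases hl with hl | hl
    · exact mem_union_left _ (mem_union_left _ hl)
    · rw [mem_insert, mem_singleton] at hl
      rcases hl with rfl | rfl <;>
        exact mem_union_left _ (mem_union_right _ (mem_image_of_mem _ (mem_univ _)))
  · intro x
    have hsub : ∀ T : Finset (Finset (Pt Γ)),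
        (((univ.filter fun y => y ≠ (0 : Γ)).image Lh ∪ {Lp g, Lp h}).filter
          fun l => x ∈ l) ⊆ T → T.card ≤ 2 →
        (((univ.filter fun y => y ≠ (0 : Γ)).image Lh ∪ {Lp g, Lp h}).filter
          fun l => x ∈ l).card ≤ 2 :=
      fun T hT hT2 => le_trans (card_le_card hT) hT2
    rcases x with ⟨a, b⟩ | b
    · refine hsub {Lh b, Lp a} ?_ ?_
      · intro l hl
        rw [mem_filter, mem_union, mem_insert, mem_singleton] at hl
        obtain ⟨hlS, hxl⟩ := hl
        rw [mem_insert, mem_singleton]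
        rcases hlS with hlS | rfl | rfl
        · obtain ⟨c, _, rfl⟩ := mem_image.mp hlS
          rw [mem_Lh_inl] at hxl
          exact Or.inl (by rw [hxl])
        · rw [mem_Lp_inl] at hxl
          exact Or.inr (by rw [hxl.1])
        · rw [mem_Lp_inl] at hxl
          exact Or.inr (by rw [hxl.1])
      · exact le_trans (card_insert_le _ _) (by simp)
    · refine hsub {Lp g, Lp h} ?_ ?_
      · intro l hl
        rw [mem_filter, mem_union, mem_insert, mem_singleton] at hl
        obtain ⟨hlS, hxl⟩ := hl
        rw [mem_insert, mem_singleton]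
        rcases hlS with hlS | rfl | rfl
        · obtain ⟨c, _, rfl⟩ := mem_image.mp hlS
          exact absurd hxl mem_Lh_inr
        · exact Or.inl rfl
        · exact Or.inr rfl
      · exact le_trans (card_insert_le _ _) (by simp)
  · have hdisj : Disjoint ((univ.filter fun x => x ≠ (0 : Γ)).image Lh)
        ({Lp g, Lp h} : Finset (Finset (Pt Γ))) := by
      rw [disjoint_left]
      intro l hl hl'
      obtain ⟨c, _, rfl⟩ := mem_image.mp hl
      rw [mem_insert, mem_singleton] at hl'
      rcases hl' with hl' | hl' <;> exact Lh_ne_Lp _ _ hl'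
    rw [card_union_of_disjoint hdisj,
      card_image_of_injective _ Lh_injective,
      card_insert_of_notMem (by simpa using hLp_inj), card_singleton]
    have : (univ.filter fun x => x ≠ (0 : Γ)).card = n - 1 := by
      rw [filter_ne']
      rw [card_erase_of_mem (mem_univ _), card_univ, hn]
    omega
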